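/- Let H ∈ (1/4, 1/2) and ϑ ∈ [0, 1/2 − H). Then the constant K := ∫_ℝ ∫_ℝ |p_1(y) − p_1(z)|² |y − z|^{2H−2} |y|^{2ϑ} dy dz is finite, and for every τ > 0, ∫_ℝ ∫_ℝ |p_τ(y) − p_τ(z)|² |y − z|^{2H−2} |y|^{2ϑ} dy dz = τ^{H+ϑ−1} · K. -/
import Mathlib


open MeasureTheory

/-- The heat kernel on ℝ: `p_t(x) = (4πt)^{-1/2} exp(-x²/(4t))`. -/
noncomputable def heatKernel (t x : ℝ) : ℝ :=
  (4 * Real.pi * t) ^ (-(1 / 2 : ℝ)) * Real.exp (-(x ^ 2) / (4 * t))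

lemma exp_diff_le (a b : ℝ) : |Real.exp (-a) - Real.exp (-b)| ≤ |a - b| * Real.exp (-(min a b)) := by
  wlog hab : a ≤ b generalizing a b
  · rw [abs_sub_comm, abs_sub_comm a b, min_comm]; exact this b a (le_of_not_ge hab)
  rw [min_eq_left hab, abs_of_nonneg (sub_nonneg.2 (Real.exp_le_exp.2 (neg_le_neg hab))),
    abs_of_nonpos (sub_nonpos.2 hab), neg_sub]
  have h : Real.exp (-b) = Real.exp (-a) * Real.exp (-(b - a)) := by
    rw [← Real.exp_add]; ring_nf
  rw [h]
  have h2 : 1 - Real.exp (-(b - a)) ≤ b - a := by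
    nlinarith [Real.add_one_le_exp (-(b - a))]
  nlinarith [Real.exp_pos (-a), Real.exp_nonneg (-(b-a))]

noncomputable def Ek (x : ℝ) : ℝ := Real.exp (-(1/16) * x ^ 2)

lemma Ek_pos (x : ℝ) : 0 < Ek x := Real.exp_pos _

lemma Ek_sq (x : ℝ) : Ek x ^ 2 = Real.exp (-(1/8) * x ^ 2) := by
  rw [Ek, ← Real.exp_nat_mul]; congr 1; ring

lemma hk_diff_le (y z : ℝ) :
    |heatKernel 1 y - heatKernel 1 z| ≤ 12 * min 1 |y - z| * (Ek y + Ek z) := by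
  set c := (4 * Real.pi * 1) ^ (-(1 / 2 : ℝ)) with hcdef
  have hc0 : 0 < c := Real.rpow_pos_of_pos (by positivity) _
  have hc1 : c ≤ 1 :=
    Real.rpow_le_one_of_one_le_of_nonpos (by nlinarith [Real.pi_gt_three]) (by norm_num)
  set m := min |y| |z| with hm
  have hm0 : 0 ≤ m := le_min (abs_nonneg _) (abs_nonneg _)
  have hmin : Real.exp (-(1/16) * m ^ 2) ≤ Ek y + Ek z := by
    rcases le_total |y| |z| with h | h
    · rw [hm, min_eq_left h]
      have e : Real.exp (-(1/16) * |y| ^ 2) = Ek y := by rw [Ek, sq_abs]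
      rw [e]; linarith [Ek_pos z]
    · rw [hm, min_eq_right h]
      have e : Real.exp (-(1/16) * |z| ^ 2) = Ek z := by rw [Ek, sq_abs]
      rw [e]; linarith [Ek_pos y]
  have hkeq : ∀ x : ℝ, heatKernel 1 x = c * Real.exp (-(x ^ 2 / 4)) := by
    intro x
    have e : -(x ^ 2) / (4 * 1) = -(x ^ 2 / 4) := by ring
    rw [heatKernel, e]
  rw [hkeq, hkeq, ← mul_sub, abs_mul, abs_of_pos hc0]
  rcases le_total |y - z| 1 with hle | hle
  · rw [min_eq_right hle]
    have h1 : |Real.exp (-(y ^ 2 / 4)) - Real.exp (-(z ^ 2 / 4))| ≤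
        |y ^ 2 / 4 - z ^ 2 / 4| * Real.exp (-(m ^ 2 / 4)) := by
      have h0 := exp_diff_le (y ^ 2 / 4) (z ^ 2 / 4)
      have hmeq : min (y ^ 2 / 4) (z ^ 2 / 4) = m ^ 2 / 4 := by
        rcases le_total |y| |z| with h | h
        · have hsq : y ^ 2 / 4 ≤ z ^ 2 / 4 := by
            nlinarith [sq_abs y, sq_abs z, mul_self_le_mul_self (abs_nonneg y) h,
              sq_abs y]
          rw [hm, min_eq_left h, min_eq_left hsq, sq_abs]
        · have hsq : z ^ 2 / 4 ≤ y ^ 2 / 4 := by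
            nlinarith [sq_abs y, sq_abs z, mul_self_le_mul_self (abs_nonneg z) h]
          rw [hm, min_eq_right h, min_eq_right hsq, sq_abs]
      rwa [hmeq] at h0
    have h2 : |y ^ 2 / 4 - z ^ 2 / 4| ≤ |y - z| * (2 * m + 1) / 4 := by
      have habs : |y ^ 2 - z ^ 2| = |y - z| * |y + z| := by rw [← abs_mul]; ring_nf
      have h3 : |y| ≤ m + 1 := by
        rcases le_total |y| |z| with h | h
        · rw [hm, min_eq_left h]; linarith
        · rw [hm, min_eq_right h]
          have := abs_sub_abs_le_abs_sub y z; linarith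
      have h4 : |z| ≤ m + 1 := by
        rcases le_total |y| |z| with h | h
        · rw [hm, min_eq_left h]
          have h5 := abs_sub_abs_le_abs_sub z y; rw [abs_sub_comm] at h5; linarith
        · rw [hm, min_eq_right h]; linarith
      have hyz : |y + z| ≤ 2 * m + 1 := by
        have hmm : |y| + |z| ≤ 2 * m + 1 := by
          rcases le_total |y| |z| with h | h
          · have e : m = |y| := by rw [hm, min_eq_left h]
            rw [e] at h4 ⊢; linarith
          · have e : m = |z| := by rw [hm, min_eq_right h]
            rw [e] at h3 ⊢; linarith
        linarith [abs_add_le y z]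
      have e : |y ^ 2 / 4 - z ^ 2 / 4| = |y ^ 2 - z ^ 2| / 4 := by
        rw [show y ^ 2 / 4 - z ^ 2 / 4 = (y ^ 2 - z ^ 2) / 4 by ring, abs_div]
        norm_num
      rw [e, habs]
      have h6 := abs_nonneg (y - z)
      gcongr
    have h3 : (2 * m + 1) / 4 * Real.exp (-(m ^ 2 / 4)) ≤ 12 * Real.exp (-(1/16) * m ^ 2) := by
      have e1 : (2 * m + 1) / 4 ≤ Real.exp m := by
        nlinarith [Real.add_one_le_exp m]
      have e3 : Real.exp (m - m ^ 2 / 4) ≤ 12 * Real.exp (-(1/16) * m ^ 2) := by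
        rw [show Real.exp (m - m ^ 2 / 4)
            = Real.exp (-(1/16) * m ^ 2) * Real.exp (m - 3 * m ^ 2 / 16) by
          rw [← Real.exp_add]; ring_nf]
        rw [show (12 : ℝ) * Real.exp (-(1/16) * m ^ 2)
            = Real.exp (-(1/16) * m ^ 2) * 12 from mul_comm _ _]
        have h7 : m - 3 * m ^ 2 / 16 ≤ 2 := by nlinarith [sq_nonneg (m - 8/3)]
        have h8 : Real.exp (m - 3 * m ^ 2 / 16) ≤ 12 := by
          calc Real.exp (m - 3 * m ^ 2 / 16) ≤ Real.exp 2 := Real.exp_le_exp.2 h7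
            _ = Real.exp 1 * Real.exp 1 := by rw [← Real.exp_add]; norm_num
            _ ≤ 12 := by nlinarith [Real.exp_one_lt_d9, Real.exp_pos 1]
        have := Real.exp_pos (-(1/16) * m ^ 2)
        gcongr
      calc (2 * m + 1) / 4 * Real.exp (-(m ^ 2 / 4))
          ≤ Real.exp m * Real.exp (-(m ^ 2 / 4)) := by
            have := Real.exp_pos (-(m ^ 2 / 4)); gcongr
        _ = Real.exp (m - m ^ 2 / 4) := by rw [← Real.exp_add]; ring_nf
        _ ≤ 12 * Real.exp (-(1/16) * m ^ 2) := e3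
    have hb : |Real.exp (-(y ^ 2 / 4)) - Real.exp (-(z ^ 2 / 4))| ≤
        |y - z| * ((2 * m + 1) / 4 * Real.exp (-(m ^ 2 / 4))) := by
      calc |Real.exp (-(y ^ 2 / 4)) - Real.exp (-(z ^ 2 / 4))|
          ≤ |y ^ 2 / 4 - z ^ 2 / 4| * Real.exp (-(m ^ 2 / 4)) := h1
        _ ≤ |y - z| * (2 * m + 1) / 4 * Real.exp (-(m ^ 2 / 4)) := by
            have := Real.exp_pos (-(m ^ 2 / 4)); gcongr
        _ = |y - z| * ((2 * m + 1) / 4 * Real.exp (-(m ^ 2 / 4))) := by ring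
    have step1 : c * |Real.exp (-(y ^ 2 / 4)) - Real.exp (-(z ^ 2 / 4))|
        ≤ 1 * (|y - z| * ((2 * m + 1) / 4 * Real.exp (-(m ^ 2 / 4)))) :=
      mul_le_mul hc1 hb (abs_nonneg _) zero_le_one
    have step2 : |y - z| * ((2 * m + 1) / 4 * Real.exp (-(m ^ 2 / 4)))
        ≤ |y - z| * (12 * (Ek y + Ek z)) := by
      apply mul_le_mul_of_nonneg_left _ (abs_nonneg _)
      calc (2 * m + 1) / 4 * Real.exp (-(m ^ 2 / 4))
          ≤ 12 * Real.exp (-(1/16) * m ^ 2) := h3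
        _ ≤ 12 * (Ek y + Ek z) := by linarith
    calc c * |Real.exp (-(y ^ 2 / 4)) - Real.exp (-(z ^ 2 / 4))|
        ≤ |y - z| * (12 * (Ek y + Ek z)) := by linarith
      _ = 12 * |y - z| * (Ek y + Ek z) := by ring
  · rw [min_eq_left hle]
    have h1 : |Real.exp (-(y ^ 2 / 4)) - Real.exp (-(z ^ 2 / 4))| ≤ Ek y + Ek z := by
      have e1 : Real.exp (-(y ^ 2 / 4)) ≤ Ek y := Real.exp_le_exp.2 (by nlinarith [sq_nonneg y])
      have e2 : Real.exp (-(z ^ 2 / 4)) ≤ Ek z := Real.exp_le_exp.2 (by nlinarith [sq_nonneg z])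
      have := Real.exp_pos (-(y ^ 2 / 4)); have := Real.exp_pos (-(z ^ 2 / 4))
      rw [abs_sub_le_iff]; constructor <;> nlinarith [Ek_pos y, Ek_pos z]
    calc c * |Real.exp (-(y ^ 2 / 4)) - Real.exp (-(z ^ 2 / 4))|
        ≤ 1 * (Ek y + Ek z) := mul_le_mul hc1 h1 (abs_nonneg _) zero_le_one
      _ ≤ 12 * 1 * (Ek y + Ek z) := by nlinarith [Ek_pos y, Ek_pos z]

lemma integrable_of_even_half {f : ℝ → ℝ} (heven : ∀ x, f (-x) = f x)
    (h : IntegrableOn f (Set.Ioi 0)) : Integrable f := by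
  have h' : IntegrableOn f (Set.Ici 0) := by
    rwa [integrableOn_Ici_iff_integrableOn_Ioi]
  rw [← integrableOn_univ, ← Set.Iic_union_Ici_of_le le_rfl, integrableOn_union]
  refine ⟨?_, h'⟩
  have h_map_neg : ((volume : Measure ℝ).restrict (Set.Ici 0)).map Neg.neg
      = volume.restrict (Set.Iic 0) := by
    conv => rhs; rw [← Measure.map_neg_eq_self (volume : Measure ℝ),
      measurableEmbedding_neg.restrict_map]
    simp
  rw [IntegrableOn, ← h_map_neg, measurableEmbedding_neg.integrable_map_iff]
  have hfc : f ∘ Neg.neg = f := funext heven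
  rw [hfc]
  exact h'

lemma integrable_min_rpow {a : ℝ} (h1 : -3 < a) (h2 : a < -1) :
    Integrable (fun u : ℝ => min 1 |u| ^ 2 * |u| ^ a) := by
  have hmeas : Measurable (fun u : ℝ => min 1 |u| ^ 2 * |u| ^ a) :=
    ((measurable_const.min measurable_abs).pow_const 2).mul (measurable_abs.pow_const a)
  have hIoi : IntegrableOn (fun u : ℝ => min 1 |u| ^ 2 * |u| ^ a) (Set.Ioi 1) := by
    apply Integrable.mono' (integrableOn_Ioi_rpow_of_lt h2 one_pos)
      hmeas.aestronglyMeasurable.restrict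
    filter_upwards [ae_restrict_mem measurableSet_Ioi] with u hu
    have hu1 : (1:ℝ) < u := hu
    have habs : |u| = u := abs_of_pos (lt_trans one_pos hu1)
    rw [Real.norm_of_nonneg (by positivity), habs, min_eq_left hu1.le]
    simp only [one_pow, one_mul]; exact le_refl _
  have hIoc : IntegrableOn (fun u : ℝ => min 1 |u| ^ 2 * |u| ^ a) (Set.Ioc 0 1) := by
    have hint : IntegrableOn (fun u : ℝ => u ^ (a + 2)) (Set.Ioc 0 1) := by
      have h := intervalIntegral.intervalIntegrable_rpow'
        (a := 0) (b := 1) (by linarith : (-1:ℝ) < a + 2)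
      rwa [intervalIntegrable_iff_integrableOn_Ioc_of_le zero_le_one] at h
    apply Integrable.mono' hint hmeas.aestronglyMeasurable.restrict
    filter_upwards [ae_restrict_mem measurableSet_Ioc] with u hu
    obtain ⟨hu0, hu1⟩ := hu
    have habs : |u| = u := abs_of_pos hu0
    rw [Real.norm_of_nonneg (by positivity), habs, min_eq_right hu1,
      ← Real.rpow_natCast u 2, ← Real.rpow_add hu0]
    rw [show ((2:ℕ):ℝ) + a = a + 2 by push_cast; ring]
  have hIoi0 : IntegrableOn (fun u : ℝ => min 1 |u| ^ 2 * |u| ^ a) (Set.Ioi 0) := by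
    rw [show Set.Ioi (0:ℝ) = Set.Ioc 0 1 ∪ Set.Ioi 1 from
      (Set.Ioc_union_Ioi_eq_Ioi zero_le_one).symm]
    exact hIoc.union hIoi
  exact integrable_of_even_half (fun x => by rw [abs_neg]) hIoi0

lemma abs_rpow_le (p x : ℝ) (hp0 : 0 ≤ p) (hp1 : p ≤ 1) : |x| ^ p ≤ 1 + |x| := by
  rcases le_total |x| 1 with h | h
  · have := Real.rpow_le_one (abs_nonneg x) h hp0
    linarith [abs_nonneg x]
  · calc |x| ^ p ≤ |x| ^ (1:ℝ) := Real.rpow_le_rpow_of_exponent_le h hp1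
      _ = |x| := Real.rpow_one _
      _ ≤ 1 + |x| := by linarith

lemma integrable_g1 {p : ℝ} (hp0 : 0 ≤ p) (hp1 : p ≤ 1) :
    Integrable (fun z : ℝ => |z| ^ p * Real.exp (-(1/8) * z ^ 2)) := by
  apply Integrable.mono' ((integrable_exp_neg_mul_sq (by norm_num : (0:ℝ) < 1/16)).const_mul
    (Real.exp 4))
  · exact ((measurable_abs.pow_const p).mul
      ((measurable_id.pow_const 2).const_mul (-(1/8))).exp).aestronglyMeasurable
  · filter_upwards with z
    have h1 : |z| ^ p ≤ 1 + |z| := abs_rpow_le p z hp0 hp1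
    have h2 : 1 + |z| ≤ Real.exp |z| := by linarith [Real.add_one_le_exp |z|]
    have h3 : Real.exp |z| * Real.exp (-(1/8) * z ^ 2)
        = Real.exp (-(1/16) * z ^ 2) * Real.exp (|z| - (1/16) * z ^ 2) := by
      rw [← Real.exp_add, ← Real.exp_add]; congr 1
      nlinarith [sq_abs z]
    have h4 : Real.exp (|z| - (1/16) * z ^ 2) ≤ Real.exp 4 := by
      apply Real.exp_le_exp.2
      nlinarith [sq_nonneg (|z| - 8), sq_abs z]
    have h5 : (0:ℝ) ≤ Real.exp (-(1/16) * z ^ 2) := (Real.exp_pos _).le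
    rw [Real.norm_of_nonneg (by positivity)]
    calc |z| ^ p * Real.exp (-(1/8) * z ^ 2)
        ≤ Real.exp |z| * Real.exp (-(1/8) * z ^ 2) := by
          have := (Real.exp_pos (-(1/8) * z ^ 2)).le
          apply mul_le_mul_of_nonneg_right _ this
          linarith
      _ = Real.exp (-(1/16) * z ^ 2) * Real.exp (|z| - (1/16) * z ^ 2) := h3
      _ ≤ Real.exp (-(1/16) * z ^ 2) * Real.exp 4 := by
          apply mul_le_mul_of_nonneg_left h4 h5
      _ = Real.exp 4 * Real.exp (-(1/16) * z ^ 2) := mul_comm _ _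

lemma conv_integrable {f g : ℝ → ℝ} (hf : Integrable f) (hg : Integrable g) :
    Integrable (fun q : ℝ × ℝ => f q.2 * g (q.1 - q.2)) := by
  rw [MeasureTheory.Measure.volume_eq_prod]
  exact hf.convolution_integrand (ContinuousLinearMap.mul ℝ ℝ) hg

lemma conv_integrable' {f g : ℝ → ℝ} (hf : Integrable f) (hg : Integrable g)
    (hge : ∀ x, g (-x) = g x) :
    Integrable (fun q : ℝ × ℝ => f q.1 * g (q.1 - q.2)) := by
  have h := conv_integrable hf hg
  rw [MeasureTheory.Measure.volume_eq_prod] at h ⊢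
  have h2 := h.swap
  have e : ((fun q : ℝ × ℝ => f q.2 * g (q.1 - q.2)) ∘ Prod.swap)
      = fun q : ℝ × ℝ => f q.1 * g (q.1 - q.2) := by
    funext q
    simp only [Function.comp, Prod.swap]
    rw [show q.2 - q.1 = -(q.1 - q.2) by ring, hge]
  rwa [e] at h2

lemma rpow_split (p a b : ℝ) (hp0 : 0 ≤ p) (hp1 : p ≤ 1) (ha : 0 ≤ a) (hb : 0 ≤ b) :
    (a + b) ^ p ≤ 2 * (a ^ p + b ^ p) := by
  have h2 : (2:ℝ) ^ p ≤ 2 := by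
    calc (2:ℝ) ^ p ≤ (2:ℝ) ^ (1:ℝ) := Real.rpow_le_rpow_of_exponent_le one_le_two hp1
      _ = 2 := Real.rpow_one 2
  rcases le_total a b with h | h
  · calc (a + b) ^ p ≤ (2 * b) ^ p := Real.rpow_le_rpow (by linarith) (by linarith) hp0
      _ = 2 ^ p * b ^ p := Real.mul_rpow (by norm_num) hb
      _ ≤ 2 * b ^ p := mul_le_mul_of_nonneg_right h2 (Real.rpow_nonneg hb p)
      _ ≤ 2 * (a ^ p + b ^ p) := by nlinarith [Real.rpow_nonneg ha p]
  · calc (a + b) ^ p ≤ (2 * a) ^ p := Real.rpow_le_rpow (by linarith) (by linarith) hp0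
      _ = 2 ^ p * a ^ p := Real.mul_rpow (by norm_num) ha
      _ ≤ 2 * a ^ p := mul_le_mul_of_nonneg_right h2 (Real.rpow_nonneg ha p)
      _ ≤ 2 * (a ^ p + b ^ p) := by nlinarith [Real.rpow_nonneg hb p]

lemma hk_scale {τ : ℝ} (hτ : 0 < τ) (u : ℝ) :
    heatKernel τ (Real.sqrt τ * u) = τ ^ (-(1/2 : ℝ)) * heatKernel 1 u := by
  unfold heatKernel
  have h4π : (0:ℝ) ≤ 4 * Real.pi := by positivity
  rw [Real.mul_rpow h4π hτ.le, mul_pow, Real.sq_sqrt hτ.le]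
  have e : -(τ * u ^ 2) / (4 * τ) = -(u ^ 2) / (4 * 1) := by
    field_simp
  rw [e]
  ring

theorem stmt3 (H ϑ : ℝ) (hH1 : 1 / 4 < H) (hH2 : H < 1 / 2)
    (hϑ0 : 0 ≤ ϑ) (hϑ1 : ϑ < 1 / 2 - H) :
    Integrable (fun q : ℝ × ℝ =>
      |heatKernel 1 q.1 - heatKernel 1 q.2| ^ 2 * |q.1 - q.2| ^ (2 * H - 2) *
        |q.1| ^ (2 * ϑ)) ∧
    ∀ τ : ℝ, 0 < τ →
      (∫ y : ℝ, ∫ z : ℝ,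
          |heatKernel τ y - heatKernel τ z| ^ 2 * |y - z| ^ (2 * H - 2) * |y| ^ (2 * ϑ)) =
        τ ^ (H + ϑ - 1) *
          ∫ y : ℝ, ∫ z : ℝ,
            |heatKernel 1 y - heatKernel 1 z| ^ 2 * |y - z| ^ (2 * H - 2) * |y| ^ (2 * ϑ) := by
  constructor
  · -- Integrability
    have hf1 : Integrable (fun u : ℝ => min 1 |u| ^ 2 * |u| ^ (2 * H - 2)) :=
      integrable_min_rpow (by linarith) (by linarith)
    have hf2 : Integrable (fun u : ℝ => min 1 |u| ^ 2 * |u| ^ (2 * H - 2 + 2 * ϑ)) :=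
      integrable_min_rpow (by linarith) (by linarith)
    have hgD : Integrable (fun z : ℝ => Real.exp (-(1/8) * z ^ 2)) :=
      integrable_exp_neg_mul_sq (by norm_num)
    have hg1 : Integrable (fun z : ℝ => |z| ^ (2 * ϑ) * Real.exp (-(1/8) * z ^ 2)) :=
      integrable_g1 (by linarith) (by linarith)
    have hf1e : ∀ x : ℝ, min 1 |(-x)| ^ 2 * |(-x)| ^ (2 * H - 2)
        = min 1 |x| ^ 2 * |x| ^ (2 * H - 2) := fun x => by rw [abs_neg]
    have hG : Integrable (fun q : ℝ × ℝ =>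
        288 * ((|q.1| ^ (2 * ϑ) * Real.exp (-(1/8) * q.1 ^ 2)) *
            (min 1 |q.1 - q.2| ^ 2 * |q.1 - q.2| ^ (2 * H - 2)))
        + 576 * (Real.exp (-(1/8) * q.2 ^ 2) *
            (min 1 |q.1 - q.2| ^ 2 * |q.1 - q.2| ^ (2 * H - 2 + 2 * ϑ)))
        + 576 * ((|q.2| ^ (2 * ϑ) * Real.exp (-(1/8) * q.2 ^ 2)) *
            (min 1 |q.1 - q.2| ^ 2 * |q.1 - q.2| ^ (2 * H - 2)))) := by
      exact (((conv_integrable' hg1 hf1 hf1e).const_mul 288).add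
        ((conv_integrable hgD hf2).const_mul 576)).add
        ((conv_integrable hg1 hf1).const_mul 576)
    have hkm : Measurable (heatKernel 1) := by
      unfold heatKernel
      exact (((measurable_id.pow_const 2).neg.div_const _).exp).const_mul _
    apply Integrable.mono' hG
    · exact ((((hkm.comp measurable_fst).sub (hkm.comp measurable_snd)).abs.pow_const 2).mul
        ((measurable_fst.sub measurable_snd).abs.pow_const _)).mul
        (measurable_fst.abs.pow_const _) |>.aestronglyMeasurable
    · filter_upwards with q
      obtain ⟨y, z⟩ := q
      simp only
      rw [Real.norm_of_nonneg (by positivity)]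
      -- abbreviations
      have hM0 : (0:ℝ) ≤ min 1 |y - z| := le_min zero_le_one (abs_nonneg _)
      have hA0 : (0:ℝ) ≤ |y - z| ^ (2 * H - 2) := Real.rpow_nonneg (abs_nonneg _) _
      have hP0 : (0:ℝ) ≤ |y| ^ (2 * ϑ) := Real.rpow_nonneg (abs_nonneg _) _
      have hDy : (0:ℝ) < Real.exp (-(1/8) * y ^ 2) := Real.exp_pos _
      have hDz : (0:ℝ) < Real.exp (-(1/8) * z ^ 2) := Real.exp_pos _
      have hb := hk_diff_le y z
      have hsq : |heatKernel 1 y - heatKernel 1 z| ^ 2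
          ≤ 288 * min 1 |y - z| ^ 2 *
            (Real.exp (-(1/8) * y ^ 2) + Real.exp (-(1/8) * z ^ 2)) := by
        have hS : (Ek y + Ek z) ^ 2
            ≤ 2 * (Real.exp (-(1/8) * y ^ 2) + Real.exp (-(1/8) * z ^ 2)) := by
          rw [← Ek_sq, ← Ek_sq]
          nlinarith [sq_nonneg (Ek y - Ek z)]
        calc |heatKernel 1 y - heatKernel 1 z| ^ 2
            ≤ (12 * min 1 |y - z| * (Ek y + Ek z)) ^ 2 :=
              pow_le_pow_left₀ (abs_nonneg _) hb 2
          _ = 144 * min 1 |y - z| ^ 2 * (Ek y + Ek z) ^ 2 := by ring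
          _ ≤ 144 * min 1 |y - z| ^ 2 *
              (2 * (Real.exp (-(1/8) * y ^ 2) + Real.exp (-(1/8) * z ^ 2))) := by
              have : (0:ℝ) ≤ 144 * min 1 |y - z| ^ 2 := by positivity
              exact mul_le_mul_of_nonneg_left hS this
          _ = 288 * min 1 |y - z| ^ 2 *
              (Real.exp (-(1/8) * y ^ 2) + Real.exp (-(1/8) * z ^ 2)) := by ring
      have hmul : |heatKernel 1 y - heatKernel 1 z| ^ 2 * |y - z| ^ (2 * H - 2) * |y| ^ (2 * ϑ)
          ≤ 288 * min 1 |y - z| ^ 2 *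
            (Real.exp (-(1/8) * y ^ 2) + Real.exp (-(1/8) * z ^ 2)) *
            |y - z| ^ (2 * H - 2) * |y| ^ (2 * ϑ) := by
        exact mul_le_mul_of_nonneg_right (mul_le_mul_of_nonneg_right hsq hA0) hP0
      have hPsplit : |y| ^ (2 * ϑ) ≤ 2 * (|y - z| ^ (2 * ϑ) + |z| ^ (2 * ϑ)) := by
        have h1 : |y| ≤ |y - z| + |z| := by
          calc |y| = |(y - z) + z| := by ring_nf
            _ ≤ |y - z| + |z| := abs_add_le _ _
        calc |y| ^ (2 * ϑ) ≤ (|y - z| + |z|) ^ (2 * ϑ) :=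
            Real.rpow_le_rpow (abs_nonneg _) h1 (by linarith)
          _ ≤ 2 * (|y - z| ^ (2 * ϑ) + |z| ^ (2 * ϑ)) :=
            rpow_split _ _ _ (by linarith) (by linarith) (abs_nonneg _) (abs_nonneg _)
      have hAQ : |y - z| ^ (2 * H - 2) * |y - z| ^ (2 * ϑ)
          = |y - z| ^ (2 * H - 2 + 2 * ϑ) := by
        rw [Real.rpow_add' (abs_nonneg _) (by intro h; nlinarith)]
      have hterm2 : 288 * min 1 |y - z| ^ 2 * Real.exp (-(1/8) * z ^ 2) *
            |y - z| ^ (2 * H - 2) * |y| ^ (2 * ϑ)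
          ≤ 576 * (Real.exp (-(1/8) * z ^ 2) *
              (min 1 |y - z| ^ 2 * |y - z| ^ (2 * H - 2 + 2 * ϑ)))
            + 576 * ((|z| ^ (2 * ϑ) * Real.exp (-(1/8) * z ^ 2)) *
              (min 1 |y - z| ^ 2 * |y - z| ^ (2 * H - 2))) := by
        have hc0 : (0:ℝ) ≤ 288 * min 1 |y - z| ^ 2 * Real.exp (-(1/8) * z ^ 2) *
            |y - z| ^ (2 * H - 2) := by positivity
        calc 288 * min 1 |y - z| ^ 2 * Real.exp (-(1/8) * z ^ 2) *
              |y - z| ^ (2 * H - 2) * |y| ^ (2 * ϑ)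
            ≤ 288 * min 1 |y - z| ^ 2 * Real.exp (-(1/8) * z ^ 2) *
              |y - z| ^ (2 * H - 2) * (2 * (|y - z| ^ (2 * ϑ) + |z| ^ (2 * ϑ))) :=
              mul_le_mul_of_nonneg_left hPsplit hc0
          _ = 576 * (Real.exp (-(1/8) * z ^ 2) *
                (min 1 |y - z| ^ 2 * (|y - z| ^ (2 * H - 2) * |y - z| ^ (2 * ϑ))))
              + 576 * ((|z| ^ (2 * ϑ) * Real.exp (-(1/8) * z ^ 2)) *
                (min 1 |y - z| ^ 2 * |y - z| ^ (2 * H - 2))) := by ring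
          _ = _ := by rw [hAQ]
      calc |heatKernel 1 y - heatKernel 1 z| ^ 2 * |y - z| ^ (2 * H - 2) * |y| ^ (2 * ϑ)
          ≤ 288 * min 1 |y - z| ^ 2 *
            (Real.exp (-(1/8) * y ^ 2) + Real.exp (-(1/8) * z ^ 2)) *
            |y - z| ^ (2 * H - 2) * |y| ^ (2 * ϑ) := hmul
        _ = 288 * ((|y| ^ (2 * ϑ) * Real.exp (-(1/8) * y ^ 2)) *
              (min 1 |y - z| ^ 2 * |y - z| ^ (2 * H - 2)))
            + 288 * min 1 |y - z| ^ 2 * Real.exp (-(1/8) * z ^ 2) *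
              |y - z| ^ (2 * H - 2) * |y| ^ (2 * ϑ) := by ring
        _ ≤ 288 * ((|y| ^ (2 * ϑ) * Real.exp (-(1/8) * y ^ 2)) *
              (min 1 |y - z| ^ 2 * |y - z| ^ (2 * H - 2)))
            + (576 * (Real.exp (-(1/8) * z ^ 2) *
                (min 1 |y - z| ^ 2 * |y - z| ^ (2 * H - 2 + 2 * ϑ)))
              + 576 * ((|z| ^ (2 * ϑ) * Real.exp (-(1/8) * z ^ 2)) *
                (min 1 |y - z| ^ 2 * |y - z| ^ (2 * H - 2)))) := by linarith
        _ = _ := by ring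
  · -- Scaling
    intro τ hτ
    have hs : 0 < Real.sqrt τ := Real.sqrt_pos.2 hτ
    have key : ∀ u v : ℝ,
        |heatKernel τ (Real.sqrt τ * u) - heatKernel τ (Real.sqrt τ * v)| ^ 2 *
          |Real.sqrt τ * u - Real.sqrt τ * v| ^ (2 * H - 2) * |Real.sqrt τ * u| ^ (2 * ϑ)
        = τ ^ (H + ϑ - 2) *
          (|heatKernel 1 u - heatKernel 1 v| ^ 2 * |u - v| ^ (2 * H - 2) * |u| ^ (2 * ϑ)) := by
      intro u v
      rw [hk_scale hτ u, hk_scale hτ v, ← mul_sub, abs_mul,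
        abs_of_pos (Real.rpow_pos_of_pos hτ _), ← mul_sub, abs_mul, abs_of_pos hs, abs_mul,
        abs_of_pos hs, Real.mul_rpow hs.le (abs_nonneg _), Real.mul_rpow hs.le (abs_nonneg _),
        mul_pow, Real.sqrt_eq_rpow, ← Real.rpow_natCast (τ ^ (-(1/2:ℝ))) 2,
        ← Real.rpow_mul hτ.le, ← Real.rpow_mul hτ.le, ← Real.rpow_mul hτ.le]
      rw [show (-(1/2:ℝ)) * (2:ℕ) = -1 by norm_num]
      have e1 : τ ^ (-1 : ℝ) * τ ^ (1/2 * (2*H-2)) * τ ^ (1/2*(2*ϑ)) = τ ^ (H + ϑ - 2) := by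
        rw [← Real.rpow_add hτ, ← Real.rpow_add hτ]; ring_nf
      calc τ ^ (-1:ℝ) * |heatKernel 1 u - heatKernel 1 v| ^ 2 *
            (τ ^ (1/2 * (2*H-2)) * |u - v| ^ (2*H-2)) * (τ ^ (1/2*(2*ϑ)) * |u| ^ (2*ϑ))
          = (τ ^ (-1 : ℝ) * τ ^ (1/2 * (2*H-2)) * τ ^ (1/2*(2*ϑ))) *
            (|heatKernel 1 u - heatKernel 1 v| ^ 2 * |u - v| ^ (2 * H - 2) * |u| ^ (2 * ϑ)) := by
            ring
        _ = _ := by rw [e1]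
    have h1 : ∀ G : ℝ → ℝ, (∫ y : ℝ, G y) = Real.sqrt τ * ∫ u : ℝ, G (Real.sqrt τ * u) := by
      intro G
      rw [Measure.integral_comp_mul_left G (Real.sqrt τ), abs_of_pos (inv_pos.2 hs), smul_eq_mul]
      field_simp
    calc (∫ y : ℝ, ∫ z : ℝ,
          |heatKernel τ y - heatKernel τ z| ^ 2 * |y - z| ^ (2 * H - 2) * |y| ^ (2 * ϑ))
        = Real.sqrt τ * ∫ u : ℝ, ∫ z : ℝ,
          |heatKernel τ (Real.sqrt τ * u) - heatKernel τ z| ^ 2 *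
            |Real.sqrt τ * u - z| ^ (2 * H - 2) * |Real.sqrt τ * u| ^ (2 * ϑ) :=
          h1 _
      _ = Real.sqrt τ * ∫ u : ℝ, Real.sqrt τ * ∫ v : ℝ,
          |heatKernel τ (Real.sqrt τ * u) - heatKernel τ (Real.sqrt τ * v)| ^ 2 *
            |Real.sqrt τ * u - Real.sqrt τ * v| ^ (2 * H - 2) *
            |Real.sqrt τ * u| ^ (2 * ϑ) := by
          congr 1; exact integral_congr_ae (Filter.Eventually.of_forall fun u => h1 _)
      _ = Real.sqrt τ * Real.sqrt τ * (τ ^ (H + ϑ - 2)) * ∫ u : ℝ, ∫ v : ℝ,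
          |heatKernel 1 u - heatKernel 1 v| ^ 2 * |u - v| ^ (2 * H - 2) * |u| ^ (2 * ϑ) := by
          simp_rw [key, integral_const_mul]; ring
      _ = _ := by
          rw [Real.mul_self_sqrt hτ.le]
          congr 1
          nth_rewrite 1 [← Real.rpow_one τ]
          rw [← Real.rpow_add hτ]
          ring_nf
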